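/- For every RVT code word W, the greatest common divisor of all entries of the Puiseux characteristic PC(W) = [λ₀; λ₁, …, λ_g] equals 1. -/

import Mathlib

/-- The three symbols of an RVT code word. -/
inductive RVT : Type
  | R | V | T
deriving DecidableEq, Repr

/-- Replace a leading run of `T`'s by `R`'s. -/
def deT : List RVT → List RVT
  | RVT.T :: xs => RVT.R :: deT xs
  | xs => xs

/-- If the word begins with `V`, replace that `V` and the immediately
following `T`'s by `R`'s. -/
def reg : List RVT → List RVT
  | RVT.V :: xs => RVT.R :: deT xs
  | xs => xs

/-- The lifted word `L(W)`: remove the first symbol (an `R`), then replace a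
leading maximal critical block `V Tᵗ` by `R^(t+1)`. -/
def lift (w : List RVT) : List RVT := reg w.tail

/-- Length of the leading run of `T`'s. -/
def countT : List RVT → ℕ
  | RVT.T :: xs => countT xs + 1
  | _ => 0

/-- Fueled version of the front-end recursion for the Puiseux characteristic
(Theorem PCfront): base case `[1]` on all-`R` words; given
`PC(L(W)) = [l0; l1, ..., lg]`,
(A) if `W` begins `RR` then `PC(W) = [l0; l1+l0, ..., lg+l0]`;
(B) if `W` begins `R V T^t R` or `W = R V T^t` then
`PC(W) = [(t+2)l0; (t+3)l0, l1+l0, ..., lg+l0]`;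
(C) if `W` begins `R V T^t V` then `PC(W) = [l1; l1+l0, ..., lg+l0]`. -/
def PCf : ℕ → List RVT → List ℕ
  | 0, _ => [1]
  | _ + 1, [] => [1]
  | fuel + 1, w@(_ :: rest) =>
    if w.all (· = RVT.R) then [1]
    else
      let p := PCf fuel (lift w)
      let l0 := p.headD 1
      let tl := p.tail
      match rest with
      | RVT.V :: xs =>
        match xs.drop (countT xs) with
        | RVT.V :: _ => tl.headD 1 :: tl.map (· + l0)                                -- case (C)
        | _ => ((countT xs + 2) * l0) :: ((countT xs + 3) * l0) :: tl.map (· + l0)   -- case (B)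
      | _ => l0 :: tl.map (· + l0)                                                   -- case (A)

/-- The Puiseux characteristic `PC(W)` computed by the front-end recursion. -/
def PC (w : List RVT) : List ℕ := PCf w.length w

/-- A valid RVT code word: begins with `R`, and `T` occurs only immediately
after a `V` or a `T`. -/
def ValidRVT (w : List RVT) : Prop :=
  w.head? = some RVT.R ∧
  ∀ i, w[i + 1]? = some RVT.T → (w[i]? = some RVT.V ∨ w[i]? = some RVT.T)

/-- The function `E` on strings, with `E_T[a;b] = [a;a+b]`, `E_V[a;b] = [b;a+b]`,
`E_R = E_T`, and base value `E(empty) = [1;2]`; the leftmost symbol acts last. -/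
def Efun : List RVT → ℕ × ℕ
  | [] => (1, 2)
  | RVT.V :: q => ((Efun q).2, (Efun q).1 + (Efun q).2)
  | _ :: q => ((Efun q).1, (Efun q).1 + (Efun q).2)

/-- The Euclidean-type recursion: `Euc(1,2)` is the empty word; for coprime
`a < b`, if `b < 2a` then `Euc(a,b) = V · Euc(b-a,a)`, and if `b > 2a` then
`Euc(a,b) = T · Euc(a,b-a)`. -/
def Euc (a b : ℕ) : List RVT :=
  if a = 1 ∧ b = 2 then []
  else if _h1 : 0 < a ∧ a < b ∧ b < 2 * a then RVT.V :: Euc (b - a) a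
  else if _h2 : 0 < a ∧ a < b ∧ 2 * a < b then RVT.T :: Euc a (b - a)
  else []
termination_by a + b
decreasing_by all_goals omega

/-!
A common divisor `d` of the entries of `PC(W)` also divides every entry of `PC(L(W))`: it divides
`λ₀` (directly in case (A), as `(τ+3)λ₀ - (τ+2)λ₀` in case (B), as `(λ₁+λ₀) - λ₁` in case (C)),
hence each `λᵢ` through `λᵢ + λ₀`. Iterating down to an all-`R` word, whose characteristic is
`[1]`, gives `d ∣ 1`.
-/

theorem dvd_foldr_gcd_iff {d : ℕ} {l : List ℕ} : d ∣ l.foldr Nat.gcd 0 ↔ ∀ x ∈ l, d ∣ x := by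
  induction l with
  | nil => simp
  | cons a l ih => simp [Nat.dvd_gcd_iff, ih]

theorem forall_dvd_of_forall_dvd_map_add {d a : ℕ} {l : List ℕ} (ha : d ∣ a)
    (h : ∀ x ∈ l.map (· + a), d ∣ x) : ∀ x ∈ l, d ∣ x :=
  fun _ hx ↦ (Nat.dvd_add_left ha).mp (h _ (List.mem_map_of_mem hx))

section FrontCases

variable {d : ℕ} {p : List ℕ}

theorem forall_dvd_of_caseA (h : ∀ x ∈ p.headD 1 :: p.tail.map (· + p.headD 1), d ∣ x) :
    ∀ x ∈ p, d ∣ x := by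
  cases p with
  | nil => simp
  | cons l0 tl =>
    obtain ⟨hl0, htl⟩ := List.forall_mem_cons.mp h
    exact List.forall_mem_cons.mpr ⟨hl0, forall_dvd_of_forall_dvd_map_add hl0 htl⟩

theorem forall_dvd_of_caseB {t : ℕ}
    (h : ∀ x ∈ (t + 2) * p.headD 1 :: (t + 3) * p.headD 1 :: p.tail.map (· + p.headD 1), d ∣ x) :
    ∀ x ∈ p, d ∣ x := by
  cases p with
  | nil => simp
  | cons l0 tl =>
    simp only [List.headD_cons, List.tail_cons, List.forall_mem_cons] at h
    obtain ⟨h2, h3, htl⟩ := h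
    have hl0 : d ∣ l0 := by
      rw [show (t + 3) * l0 = (t + 2) * l0 + l0 by ring] at h3
      exact (Nat.dvd_add_right h2).mp h3
    exact List.forall_mem_cons.mpr ⟨hl0, forall_dvd_of_forall_dvd_map_add hl0 htl⟩

theorem forall_dvd_of_caseC (h : ∀ x ∈ p.tail.headD 1 :: p.tail.map (· + p.headD 1), d ∣ x) :
    ∀ x ∈ p, d ∣ x := by
  match p with
  | [] => simp
  | [_] =>
    obtain rfl : d = 1 := Nat.dvd_one.mp (h 1 List.mem_cons_self)
    simp
  | l0 :: l1 :: tl =>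
    simp only [List.headD_cons, List.tail_cons, List.map_cons, List.forall_mem_cons] at h
    obtain ⟨h1, h10, htl⟩ := h
    have hl0 : d ∣ l0 := (Nat.dvd_add_right h1).mp h10
    exact List.forall_mem_cons.mpr
      ⟨hl0, List.forall_mem_cons.mpr ⟨h1, forall_dvd_of_forall_dvd_map_add hl0 htl⟩⟩

end FrontCases

theorem forall_dvd_PCf_lift {fuel : ℕ} {c : RVT} {rest : List RVT} {d : ℕ}
    (hR : ¬(c :: rest).all (· = RVT.R)) (h : ∀ x ∈ PCf (fuel + 1) (c :: rest), d ∣ x) :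
    ∀ x ∈ PCf fuel (lift (c :: rest)), d ∣ x := by
  rw [PCf, if_neg hR] at h
  split at h
  · split at h
    · exact forall_dvd_of_caseC h
    · exact forall_dvd_of_caseB h
  · exact forall_dvd_of_caseA h

theorem eq_one_of_forall_dvd_PCf : ∀ (fuel : ℕ) (w : List RVT) {d : ℕ},
    (∀ x ∈ PCf fuel w, d ∣ x) → d = 1
  | 0, _, _, h => by simpa [PCf] using h
  | _ + 1, [], _, h => by simpa [PCf] using h
  | fuel + 1, c :: rest, _, h => by
    by_cases hR : (c :: rest).all (· = RVT.R)
    · rw [PCf, if_pos hR] at h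
      simpa using h
    · exact eq_one_of_forall_dvd_PCf fuel _ (forall_dvd_PCf_lift hR h)

theorem statement3_general (W : List RVT) :
    (PC W).foldr Nat.gcd 0 = 1 :=
  eq_one_of_forall_dvd_PCf _ _ (dvd_foldr_gcd_iff.mp dvd_rfl)

/-- The greatest common divisor of all entries of the Puiseux characteristic
of any RVT code word equals `1`. -/
theorem statement3 (W : List RVT) (hW : ValidRVT W) :
    (PC W).foldr Nat.gcd 0 = 1 :=
  statement3_general W
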